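/- arXiv:1509.08202 — 3 statements merged into one kernel-verified Lean document; each statement's English description precedes it below -/
import Mathlib

section
/- Let (A, F) be a B-valued probability space (F : A → B a conditional expectation). If the *-subalgebras A₁,...,A_k containing B are B-free with respect to F, then the matrix algebras M_n(ℂ)⊗A₁,...,M_n(ℂ)⊗A_k are free with amalgamation over M_n(B) with respect to the conditional expectation id_{M_n(ℂ)} ⊗ F. -/
/-- Freeness with amalgamation with respect to a conditional expectation `F` of a family
of subsets `S i` of an algebra: every alternating product of centered elements is
mapped to `0` by `F`. -/
def IsFreeFamily {A : Type*} [Ring A] (F : A → A) {k : ℕ} (S : Fin k → Set A) : Prop :=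
  ∀ (m : ℕ) (j : Fin m → Fin k) (a : Fin m → A),
    1 ≤ m → (∀ i, a i ∈ S (j i)) →
    (∀ (i : Fin m) (h : i.val + 1 < m), j i ≠ j ⟨i.val + 1, h⟩) →
    F (((List.finRange m).map fun i => a i - F (a i)).prod) = 0

/-- Every entry of an alternating product of entrywise-centered matrices lies in the
span of scalar alternating centered products. -/
lemma matrix_entry_mem_span {A : Type*} [Ring A] [Algebra ℂ A]
    (F : A →ₗ[ℂ] A) {k : ℕ} (S : Fin k → Subalgebra ℂ A) (n : ℕ) :
    ∀ (m : ℕ) (j : Fin m → Fin k) (M : Fin m → Matrix (Fin n) (Fin n) A),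
      (∀ i r s, M i r s ∈ S (j i)) →
      ∀ r s : Fin n,
        (((List.finRange m).map fun i =>
            M i - Matrix.of fun p q => F (M i p q)).prod) r s ∈
          Submodule.span ℂ {x : A | ∃ a : Fin m → A, (∀ i, a i ∈ S (j i)) ∧
            x = ((List.finRange m).map fun i => a i - F (a i)).prod} := by
  intro m
  induction m with
  | zero =>
    intro j M _ r s
    simp only [List.finRange_zero, List.map_nil, List.prod_nil]
    rw [Matrix.one_apply]
    split
    · exact Submodule.subset_span ⟨Fin.elim0, fun i => i.elim0, by simp⟩
    · exact Submodule.zero_mem _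
  | succ m ih =>
    intro j M hmem r s
    have hsplit : ((List.finRange (m + 1)).map fun i =>
        M i - Matrix.of fun p q => F (M i p q)).prod =
        (M 0 - Matrix.of fun p q => F (M 0 p q)) *
          ((List.finRange m).map fun i =>
            M i.succ - Matrix.of fun p q => F (M i.succ p q)).prod := by
      rw [List.finRange_succ, List.map_cons, List.prod_cons, List.map_map]
      rfl
    rw [hsplit, Matrix.mul_apply]
    refine Submodule.sum_mem _ fun q _ => ?_
    have htail := ih (fun i => j i.succ) (fun i => M i.succ)
      (fun i r s => hmem i.succ r s) q s
    have hc : (M 0 - Matrix.of fun p q => F (M 0 p q)) r q = M 0 r q - F (M 0 r q) := by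
      simp [Matrix.sub_apply]
    rw [hc]
    have himg : (LinearMap.mulLeft ℂ (M 0 r q - F (M 0 r q))) ''
        {x : A | ∃ a : Fin m → A, (∀ i, a i ∈ S (j i.succ)) ∧
          x = ((List.finRange m).map fun i => a i - F (a i)).prod} ⊆
        {x : A | ∃ a : Fin (m + 1) → A, (∀ i, a i ∈ S (j i)) ∧
          x = ((List.finRange (m + 1)).map fun i => a i - F (a i)).prod} := by
      rintro x ⟨y, ⟨a, ha, rfl⟩, rfl⟩
      refine ⟨Fin.cons (M 0 r q) a, ?_, ?_⟩
      · intro i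
        refine Fin.cases ?_ ?_ i
        · simpa using hmem 0 r q
        · intro i'
          simpa using ha i'
      · rw [List.finRange_succ, List.map_cons, List.prod_cons, List.map_map]
        simp only [LinearMap.mulLeft_apply, Function.comp_def, Fin.cons_zero, Fin.cons_succ]
    have hmap : (M 0 r q - F (M 0 r q)) * (((List.finRange m).map fun i =>
        M i.succ - Matrix.of fun p q => F (M i.succ p q)).prod) q s ∈
        Submodule.span ℂ ((LinearMap.mulLeft ℂ (M 0 r q - F (M 0 r q))) ''
          {x : A | ∃ a : Fin m → A, (∀ i, a i ∈ S (j i.succ)) ∧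
            x = ((List.finRange m).map fun i => a i - F (a i)).prod}) := by
      rw [← Submodule.map_span]
      exact ⟨_, htail, rfl⟩
    exact Submodule.span_mono himg hmap

/-- If `*`-subalgebras `A₁, …, A_k` (each containing `B`) are `B`-free with respect to a
conditional expectation `F : A → B`, then the matrix algebras `M_n(ℂ) ⊗ Aᵢ` are free
with amalgamation over `M_n(B)` with respect to the entrywise conditional expectation
`id ⊗ F`. -/
theorem matrix_freeness {A : Type*} [Ring A] [StarRing A] [Algebra ℂ A]
    (B : Subalgebra ℂ A) (F : A →ₗ[ℂ] A)
    (hrange : ∀ a, F a ∈ B)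
    (hbimod : ∀ b ∈ B, ∀ b' ∈ B, ∀ a, F (b * a * b') = b * F a * b')
    (hF1 : F 1 = 1)
    {k : ℕ} (S : Fin k → Subalgebra ℂ A)
    (hstar : ∀ i, ∀ a ∈ S i, star a ∈ S i)
    (hBS : ∀ i, B ≤ S i)
    (hfree : IsFreeFamily (fun a => F a) (fun i => (S i : Set A)))
    (n : ℕ) :
    IsFreeFamily
      (fun M : Matrix (Fin n) (Fin n) A => Matrix.of fun i j => F (M i j))
      (fun i => {M : Matrix (Fin n) (Fin n) A | ∀ r s, M r s ∈ S i}) := by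
  intro m j M hm hmem halt
  funext r s
  simp only [Matrix.of_apply, Matrix.zero_apply]
  have key := matrix_entry_mem_span F S n m j M (fun i r s => hmem i r s) r s
  have hsub : {x : A | ∃ a : Fin m → A, (∀ i, a i ∈ S (j i)) ∧
      x = ((List.finRange m).map fun i => a i - F (a i)).prod} ⊆
      (LinearMap.ker F : Set A) := by
    rintro x ⟨a, ha, rfl⟩
    exact LinearMap.mem_ker.mpr (hfree m j a hm ha halt)
  exact LinearMap.mem_ker.mp (Submodule.span_le.mpr hsub key)
end

section
/- Let (A, τ) be a tracial *-probability space, u a Haar unitary, and suppose the algebra generated by subalgebras A₁ and A₂ is free from ⟨u, u*⟩. Then the subalgebras u A₁ u* and A₂ are free, and for any tuple (a₁,...,a_p) in A₁, the tuple (u a₁ u*,...,u a_p u*) has the same joint distribution as (a₁,...,a_p). -/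
/-- Freeness (over `ℂ`) of two subsets `S`, `T` of a noncommutative probability space
`(A, τ)`: every alternating product of centered elements has vanishing trace. -/
def IsFreePair {A : Type*} [Ring A] [Algebra ℂ A] (τ : A → ℂ) (S T : Set A) : Prop :=
  ∀ (m : ℕ) (j : Fin m → Bool) (a : Fin m → A),
    1 ≤ m → (∀ i, a i ∈ if j i then S else T) →
    (∀ (i : Fin m) (h : i.val + 1 < m), j i ≠ j ⟨i.val + 1, h⟩) →
    τ (((List.finRange m).map fun i => a i - algebraMap ℂ A (τ (a i))).prod) = 0

namespace HaarAux

inductive Ltr (A : Type*) where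
  | pw : ℕ → Ltr A
  | st : Bool → Ltr A
  | vl : A → Ltr A

namespace Ltr
variable {A : Type*}
def isW : Ltr A → Bool
  | .vl _ => false
  | _ => true
def isStar : Ltr A → Bool
  | .st _ => true
  | _ => false
def isLit : Ltr A → Bool
  | .st b => !b
  | _ => false
@[simp] lemma isW_pw (k : ℕ) : (Ltr.pw (A := A) k).isW = true := rfl
@[simp] lemma isW_st (b : Bool) : (Ltr.st (A := A) b).isW = true := rfl
@[simp] lemma isW_vl (x : A) : (Ltr.vl x).isW = false := rfl
@[simp] lemma isStar_pw (k : ℕ) : (Ltr.pw (A := A) k).isStar = false := rfl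
@[simp] lemma isStar_st (b : Bool) : (Ltr.st (A := A) b).isStar = true := rfl
@[simp] lemma isStar_vl (x : A) : (Ltr.vl x).isStar = false := rfl
@[simp] lemma isLit_pw (k : ℕ) : (Ltr.pw (A := A) k).isLit = false := rfl
@[simp] lemma isLit_st (b : Bool) : (Ltr.st (A := A) b).isLit = !b := rfl
@[simp] lemma isLit_vl (x : A) : (Ltr.vl x).isLit = false := rfl
def eval [Ring A] [StarRing A] [Algebra ℂ A] (u : A) (α : ℂ) : Ltr A → A
  | .pw k => u ^ (k + 1)
  | .st b => if b then star u - algebraMap ℂ A α else star u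
  | .vl x => x
end Ltr

section
variable {A : Type*} [Ring A] [StarRing A] [Algebra ℂ A]

def Ralt : Ltr A → Ltr A → Prop := fun a b => a.isW ≠ b.isW
def Rst : Ltr A → Ltr A → Prop := fun a b => a.isStar = false ∨ b.isStar = false

structure Good (τ : A →ₗ[ℂ] ℂ) (V : Subalgebra ℂ A) (L : List (Ltr A)) : Prop where
  alt : L.Chain' Ralt
  vmem : ∀ x : A, Ltr.vl x ∈ L → x ∈ V ∧ τ x = 0
  wchain : (L.filter Ltr.isW).Chain' Rst
  wfront : ∀ x ∈ (L.filter Ltr.isW).head?, x.isStar = false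

def evp (u : A) (α : ℂ) (L : List (Ltr A)) : A := (L.map (Ltr.eval u α)).prod

lemma tau_alg (τ : A →ₗ[ℂ] ℂ) (hτ1 : τ 1 = 1) (s : ℂ) : τ (algebraMap ℂ A s) = s := by
  rw [Algebra.algebraMap_eq_smul_one, map_smul, hτ1, smul_eq_mul, mul_one]

lemma freeness_case (τ : A →ₗ[ℂ] ℂ) (hτ1 : τ 1 = 1) (u : A)
    (humom : ∀ k : ℕ, 1 ≤ k → τ (u ^ k) = 0)
    (V W : Subalgebra ℂ A) (huW : u ∈ W) (hsuW : star u ∈ W)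
    (hfree : IsFreePair (fun a => τ a) (V : Set A) (W : Set A))
    (L : List (Ltr A)) (hne : L ≠ []) (hG : Good τ V L)
    (hnl : ∀ l ∈ L, l.isLit = false) :
    τ (evp u (τ (star u)) L) = 0 := by
  set α := τ (star u) with hα
  have hcent : ∀ l ∈ L, τ (l.eval u α) = 0 := by
    intro l hl
    match l with
    | .pw k => exact humom (k+1) (Nat.le_add_left 1 k)
    | .st b =>
        have hb : b = true := by
          have := hnl _ hl; simpa [Ltr.isLit] using this
        subst hb
        simp [Ltr.eval, map_sub, tau_alg τ hτ1, hα]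
    | .vl x => exact (hG.vmem x hl).2
  have hmemb : ∀ l ∈ L, l.eval u α ∈ (if l.isW then (W : Set A) else (V : Set A)) := by
    intro l hl
    match l with
    | .pw k => simpa [Ltr.eval] using pow_mem huW (k+1)
    | .st b =>
        have hb : b = true := by
          have := hnl _ hl; simpa [Ltr.isLit] using this
        subst hb
        simpa [Ltr.eval] using sub_mem hsuW (algebraMap_mem W α)
    | .vl x => simpa [Ltr.eval] using (hG.vmem x hl).1
  have hm : 1 ≤ L.length := by
    cases L with
    | nil => exact absurd rfl hne
    | cons a t => simp
  have := hfree L.length (fun i => !(L.get i).isW) (fun i => (L.get i).eval u α) hm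
    (by
      intro i
      have hmm := hmemb (L.get i) (L.get_mem i)
      simp only [List.get_eq_getElem] at hmm ⊢
      by_cases h : L[(i : ℕ)].isW = true
      · simp [h] at hmm ⊢; exact hmm
      · rw [Bool.not_eq_true] at h
        simp [h] at hmm ⊢; exact hmm)
    (by
      intro i h
      have halt := List.isChain_iff_getElem.1 hG.alt i.val (by omega)
      intro hcontra
      refine halt ?_
      have h2 : (!(L.get i).isW) = (!(L.get ⟨i.val+1, h⟩).isW) := hcontra
      have h3 := congrArg (fun b => !b) h2
      simpa using h3)
  -- now rewrite the product
  have heq : ((List.finRange L.length).map fun i =>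
      (L.get i).eval u α - algebraMap ℂ A ((fun a => τ a) ((L.get i).eval u α))).prod
      = evp u α L := by
    have h1 : ((List.finRange L.length).map fun i =>
        (L.get i).eval u α - algebraMap ℂ A (τ ((L.get i).eval u α))).prod
        = ((List.finRange L.length).map fun i => (L.get i).eval u α).prod := by
      congr 1
      apply List.map_congr_left
      intro i _
      rw [hcent (L.get i) (L.get_mem i), map_zero, sub_zero]
    rw [h1]
    congr 1
    rw [← List.ofFn_eq_map]
    have : (fun i => (L.get i).eval u α) = (Ltr.eval u α) ∘ L.get := rfl
    rw [this, ← List.map_ofFn, List.ofFn_get]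
  rw [← heq]
  exact this


lemma evp_append (u : A) (α : ℂ) (L₁ L₂ : List (Ltr A)) :
    evp u α (L₁ ++ L₂) = evp u α L₁ * evp u α L₂ := by simp [evp]

lemma evp_cons (u : A) (α : ℂ) (l : Ltr A) (L : List (Ltr A)) :
    evp u α (l :: L) = l.eval u α * evp u α L := by simp [evp]

lemma chain'_split {β : Type*} {R : β → β → Prop} {P S : List β} {w : β}
    (h : List.Chain' R (P ++ w :: S)) :
    List.Chain' R P ∧ List.Chain' R S ∧ (∀ x ∈ P.getLast?, R x w) ∧ (∀ y ∈ S.head?, R w y) := by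
  unfold List.Chain' at h
  rw [List.isChain_append, List.isChain_cons] at h
  obtain ⟨h1, ⟨h2a, h2b⟩, h3⟩ := h
  exact ⟨h1, h2b, fun x hx => h3 x hx w (by simp), h2a⟩

lemma chain'_glue {β : Type*} {R : β → β → Prop} {P S : List β} {w : β}
    (hP : List.Chain' R P) (hS : List.Chain' R S)
    (h1 : ∀ x ∈ P.getLast?, R x w) (h2 : ∀ y ∈ S.head?, R w y) :
    List.Chain' R (P ++ w :: S) := by
  unfold List.Chain'
  rw [List.isChain_append, List.isChain_cons]
  refine ⟨hP, ⟨h2, hS⟩, ?_⟩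
  intro x hx y hy
  obtain rfl : w = y := by simpa using hy
  exact h1 x hx

lemma Good.prefix {τ : A →ₗ[ℂ] ℂ} {V : Subalgebra ℂ A} {P Q : List (Ltr A)}
    (h : Good τ V (P ++ Q)) : Good τ V P := by
  have hw := h.wchain
  unfold List.Chain' at hw
  rw [List.filter_append, List.isChain_append] at hw
  refine ⟨(List.isChain_append.1 h.alt).1, fun x hx => h.vmem x (by simp [hx]), hw.1, ?_⟩
  intro x hx
  rcases hfp : P.filter Ltr.isW with _ | ⟨a, t⟩
  · rw [hfp] at hx; simp at hx
  · rw [hfp] at hx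
    obtain rfl : a = x := by simpa using hx
    exact h.wfront a (by rw [List.filter_append, hfp]; simp)

lemma eq_vl_of {w : Ltr A} (h : w.isW = false) : ∃ x, w = Ltr.vl x := by
  match w, h with
  | .vl x, _ => exact ⟨x, rfl⟩

lemma eq_pw_of {w : Ltr A} (h1 : w.isW = true) (h2 : w.isStar = false) : ∃ k, w = Ltr.pw k := by
  match w, h1, h2 with
  | .pw k, _, _ => exact ⟨k, rfl⟩

lemma wfront_helper {F T T' : List (Ltr A)} {m m' : ℕ}
    (h : ∀ x ∈ (F ++ Ltr.pw m' :: T').head?, x.isStar = false) :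
    ∀ x ∈ (F ++ Ltr.pw (A := A) m :: T).head?, x.isStar = false := by
  intro x hx
  cases F with
  | nil =>
    obtain rfl : Ltr.pw m = x := by simpa using hx
    rfl
  | cons a t =>
    obtain rfl : a = x := by simpa using hx
    exact h a (by simp)

theorem key (τ : A →ₗ[ℂ] ℂ) (hτ1 : τ 1 = 1) (u : A)
    (humom : ∀ k : ℕ, 1 ≤ k → τ (u ^ k) = 0)
    (V W : Subalgebra ℂ A) (huW : u ∈ W) (hsuW : star u ∈ W)
    (hfree : IsFreePair (fun a => τ a) (V : Set A) (W : Set A)) :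
    ∀ (n : ℕ) (L : List (Ltr A)), L.length + L.countP Ltr.isLit ≤ n → L ≠ [] →
      Good τ V L → τ (evp u (τ (star u)) L) = 0 := by
  intro n
  induction n with
  | zero =>
    intro L hlen hne _
    cases L with
    | nil => exact absurd rfl hne
    | cons a t => simp at hlen
  | succ n ih =>
    intro L hlen hne hG
    set α := τ (star u) with hα
    by_cases hlit : ∀ l ∈ L, l.isLit = false
    · exact freeness_case τ hτ1 u humom V W huW hsuW hfree L hne hG hlit
    push_neg at hlit
    obtain ⟨l0, hl0mem, hl0⟩ := hlit
    have hl0' : l0 = Ltr.st false := by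
      match l0, hl0 with
      | .pw k, h => simp at h
      | .st b, h =>
          have hb : b = false := by simpa using h
          rw [hb]
      | .vl x, h => simp at h
    rw [hl0'] at hl0mem
    obtain ⟨P, S, hLsplit⟩ := List.append_of_mem hl0mem
    -- P is nonempty and ends with a vl letter
    have hPne : P ≠ [] := by
      rintro rfl
      have := hG.wfront (Ltr.st false) (by rw [hLsplit]; simp [List.filter_cons])
      simp at this
    obtain ⟨P₀, w, hP⟩ : ∃ P₀ w, P = P₀ ++ [w] := by
      rcases P.eq_nil_or_concat with rfl | ⟨P₀, w, hw⟩
      · exact absurd rfl hPne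
      · exact ⟨P₀, w, by simpa using hw⟩
    have haltP : Ralt w (Ltr.st false) := by
      have h1 := hG.alt
      rw [hLsplit, hP] at h1
      exact (chain'_split (P := P₀ ++ [w]) h1).2.2.1 w (by simp)
    obtain ⟨x, rfl⟩ : ∃ x, w = Ltr.vl x := by
      apply eq_vl_of
      have : w.isW ≠ true := haltP
      simpa using this
    have hP₀ne : P₀ ≠ [] := by
      rintro rfl
      have := hG.wfront (Ltr.st false) (by rw [hLsplit, hP]; simp [List.filter_cons])
      simp at this
    obtain ⟨P₁, w₁, hP₀⟩ : ∃ P₁ w₁, P₀ = P₁ ++ [w₁] := by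
      rcases P₀.eq_nil_or_concat with rfl | ⟨P₁, w₁, hw⟩
      · exact absurd rfl hP₀ne
      · exact ⟨P₁, w₁, by simpa using hw⟩
    have hL : L = P₁ ++ w₁ :: Ltr.vl x :: Ltr.st false :: S := by
      rw [hLsplit, hP, hP₀]; simp
    have hw₁W : w₁.isW = true := by
      have h1 := hG.alt
      rw [hL] at h1
      have := (chain'_split (P := P₁) h1).2.2.2 (Ltr.vl x) (by simp)
      have h2 : w₁.isW ≠ false := fun hc => this (by rw [hc]; rfl)
      simpa using h2
    -- pieces of the alternation chain
    have haltL : List.Chain' Ralt (P₁ ++ w₁ :: Ltr.vl x :: Ltr.st false :: S) := by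
      rw [← hL]; exact hG.alt
    have haltparts := chain'_split (P := P₁) haltL
    obtain ⟨haltP₁, haltrest, haltlast, -⟩ := haltparts
    have haltrest2 := List.isChain_cons_cons.1 haltrest
    have haltrest3 := List.isChain_cons.1 haltrest2.2
    have hSalt : List.Chain' Ralt S := haltrest3.2
    have hSfrontalt : ∀ y ∈ S.head?, Ralt (Ltr.st false) y := haltrest3.1
    -- the filtered chain
    have hfil : L.filter Ltr.isW = (P₁.filter Ltr.isW) ++ w₁ :: Ltr.st false :: (S.filter Ltr.isW) := by
      rw [hL]
      simp [List.filter_append, List.filter_cons, hw₁W]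
    have hwchainparts := chain'_split (P := P₁.filter Ltr.isW) (by rw [← hfil]; exact hG.wchain)
    obtain ⟨hwcP₁, hwcrest, hwclast, hwcfront⟩ := hwchainparts
    have hw₁nonstar : w₁.isStar = false := by
      rcases hwcfront (Ltr.st false) (by simp) with h | h
      · exact h
      · simp at h
    obtain ⟨j, rfl⟩ : ∃ j, w₁ = Ltr.pw j := eq_pw_of hw₁W hw₁nonstar
    have hwcS : List.Chain' Rst (S.filter Ltr.isW) := (List.isChain_cons.1 hwcrest).2
    have hwcSfront : ∀ y ∈ (S.filter Ltr.isW).head?, Rst (Ltr.st false) y :=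
      (List.isChain_cons.1 hwcrest).1
    have hxV : x ∈ V ∧ τ x = 0 := hG.vmem x (by rw [hL]; simp)
    -- counting
    have hcount : L.length + L.countP Ltr.isLit =
        (P₁.length + P₁.countP Ltr.isLit) + (S.length + S.countP Ltr.isLit) + 4 := by
      rw [hL]
      simp [List.countP_append, List.countP_cons]
      try omega
    set c : A := algebraMap ℂ A α with hc
    -- the expansion of the leftmost literal star
    set L₁ : List (Ltr A) := P₁ ++ Ltr.pw j :: Ltr.vl x :: Ltr.st true :: S with hL₁
    have hevpL : evp u α L = evp u α P₁ * (u^(j+1) * (x * (star u * evp u α S))) := by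
      rw [hL]
      simp [evp_append, evp_cons, Ltr.eval, mul_assoc]
    have hevpL₁ : evp u α L₁ = evp u α P₁ * (u^(j+1) * (x * ((star u - c) * evp u α S))) := by
      rw [hL₁]
      simp [evp_append, evp_cons, Ltr.eval, mul_assoc, hc]
    have hexp : evp u α L = evp u α L₁ + c * (evp u α P₁ * (u^(j+1) * (x * evp u α S))) := by
      rw [hevpL, hevpL₁, hc]
      simp only [sub_mul, mul_sub, Algebra.left_comm]
      abel
    have hGood₁ : Good τ V L₁ := by
      constructor
      · apply chain'_glue haltP₁
        · refine List.isChain_cons_cons.2 ⟨haltrest2.1, ?_⟩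
          exact List.isChain_cons.2 ⟨hSfrontalt, hSalt⟩
        · exact haltlast
        · intro y hy
          obtain rfl : Ltr.vl x = y := by simpa using hy
          exact fun hcon => by simp at hcon
      · intro z hz
        apply hG.vmem z
        rw [hL]
        rw [hL₁] at hz
        simp only [List.mem_append, List.mem_cons] at hz ⊢
        rcases hz with h | h | h | h | h
        · tauto
        · tauto
        · tauto
        · simp at h
        · tauto
      · have hfil₁ : L₁.filter Ltr.isW =
            (P₁.filter Ltr.isW) ++ Ltr.pw j :: Ltr.st true :: (S.filter Ltr.isW) := by
          rw [hL₁]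
          simp [List.filter_append, List.filter_cons]
        rw [hfil₁]
        apply chain'_glue hwcP₁
        · exact List.isChain_cons.2 ⟨hwcSfront, hwcS⟩
        · exact hwclast
        · intro y hy
          exact Or.inl rfl
      · have hfil₁ : L₁.filter Ltr.isW =
            (P₁.filter Ltr.isW) ++ Ltr.pw j :: Ltr.st true :: (S.filter Ltr.isW) := by
          rw [hL₁]
          simp [List.filter_append, List.filter_cons]
        rw [hfil₁]
        apply wfront_helper (T' := Ltr.st false :: S.filter Ltr.isW) (m' := j)
        rw [← hfil]
        exact hG.wfront
    have hτL₁ : τ (evp u α L₁) = 0 := by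
      refine ih L₁ ?_ (by simp [hL₁]) hGood₁
      have h9 : L₁.length + L₁.countP Ltr.isLit =
          (P₁.length + P₁.countP Ltr.isLit) + (S.length + S.countP Ltr.isLit) + 3 := by
        rw [hL₁]
        simp [List.countP_append, List.countP_cons]
        try omega
      omega
    -- the remainder term
    have hT2 : τ (evp u α P₁ * (u^(j+1) * (x * evp u α S))) = 0 := by
      cases hS : S with
      | nil =>
        have hPgood : Good τ V (P₁ ++ [Ltr.pw j, Ltr.vl x]) := by
          apply Good.prefix (Q := Ltr.st false :: S)
          have he : (P₁ ++ [Ltr.pw j, Ltr.vl x]) ++ Ltr.st false :: S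
              = P₁ ++ Ltr.pw j :: Ltr.vl x :: Ltr.st false :: S := by simp
          rw [he, ← hL]
          exact hG
        have hrw : evp u α P₁ * (u^(j+1) * (x * evp u α ([] : List (Ltr A)))) =
            evp u α (P₁ ++ [Ltr.pw j, Ltr.vl x]) := by
          simp [evp_append, evp_cons, Ltr.eval, evp, mul_assoc]
        rw [hrw]
        refine ih _ ?_ (by simp) hPgood
        have h9 : (P₁ ++ [Ltr.pw j, Ltr.vl x]).length
            + (P₁ ++ [Ltr.pw j, Ltr.vl x]).countP Ltr.isLit
            = P₁.length + P₁.countP Ltr.isLit + 2 := by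
          simp [List.countP_append, List.countP_cons]
          try omega
        omega
      | cons s₀ S₀ =>
        obtain ⟨y, rfl⟩ : ∃ y, s₀ = Ltr.vl y := by
          apply eq_vl_of
          have := hSfrontalt s₀ (by rw [hS]; simp)
          have h2 : s₀.isW ≠ true := fun hcon => this (by rw [hcon]; rfl)
          simpa using h2
        rw [← hS]
        have hyV : y ∈ V ∧ τ y = 0 := hG.vmem y (by rw [hL, hS]; simp)
        set z : A := x * y - algebraMap ℂ A (τ (x * y)) with hz
        set L₂ : List (Ltr A) := P₁ ++ Ltr.pw j :: Ltr.vl z :: S₀ with hL₂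
        have hfilS : S.filter Ltr.isW = S₀.filter Ltr.isW := by
          rw [hS]; simp [List.filter_cons]
        have hevpT2 : evp u α P₁ * (u^(j+1) * (x * evp u α S)) =
            evp u α L₂ + algebraMap ℂ A (τ (x * y)) * (evp u α P₁ * (u^(j+1) * evp u α S₀)) := by
          rw [hS, hL₂]
          simp only [evp_append, evp_cons, Ltr.eval]
          have hxy : x * (y * evp u α S₀) = z * evp u α S₀ +
              algebraMap ℂ A (τ (x * y)) * evp u α S₀ := by
            rw [hz, sub_mul, ← mul_assoc]
            abel
          rw [hxy]
          simp only [mul_add, Algebra.left_comm]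
          try abel
        -- alternation pieces for S₀
        have hS₀alt : List.Chain' Ralt S₀ := by
          have hSalt2 : List.Chain' Ralt (Ltr.vl y :: S₀) := by rw [← hS]; exact hSalt
          exact (List.isChain_cons.1 hSalt2).2
        have hS₀front : ∀ h ∈ S₀.head?, Ralt (Ltr.vl y) h := by
          have hSalt2 : List.Chain' Ralt (Ltr.vl y :: S₀) := by rw [← hS]; exact hSalt
          exact (List.isChain_cons.1 hSalt2).1
        have hGood₂ : Good τ V L₂ := by
          constructor
          · apply chain'_glue haltP₁
            · exact List.isChain_cons.2 ⟨hS₀front, hS₀alt⟩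
            · exact haltlast
            · intro v hv
              obtain rfl : Ltr.vl z = v := by simpa using hv
              exact fun hcon => by simp at hcon
          · intro v hv
            rw [hL₂] at hv
            simp only [List.mem_append, List.mem_cons] at hv
            rcases hv with h | h | h | h
            · exact hG.vmem v (by rw [hL]; simp [h])
            · simp at h
            · have hvz : v = z := by simpa using h
              subst hvz
              refine ⟨?_, ?_⟩
              · rw [hz]
                exact sub_mem (mul_mem hxV.1 hyV.1) (algebraMap_mem V _)
              · rw [hz]
                simp [map_sub, tau_alg τ hτ1]
            · exact hG.vmem v (by rw [hL, hS]; simp [h])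
          · have hfil₂ : L₂.filter Ltr.isW =
                (P₁.filter Ltr.isW) ++ Ltr.pw j :: (S₀.filter Ltr.isW) := by
              rw [hL₂]
              simp [List.filter_append, List.filter_cons]
            rw [hfil₂]
            apply chain'_glue hwcP₁
            · rw [← hfilS]
              exact hwcS
            · intro v hv
              exact Or.inr rfl
            · intro v hv
              exact Or.inl rfl
          · have hfil₂ : L₂.filter Ltr.isW =
                (P₁.filter Ltr.isW) ++ Ltr.pw j :: (S₀.filter Ltr.isW) := by
              rw [hL₂]
              simp [List.filter_append, List.filter_cons]
            rw [hfil₂]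
            apply wfront_helper (T' := Ltr.st false :: S.filter Ltr.isW) (m' := j)
            rw [← hfil]
            exact hG.wfront
        have hτL₂ : τ (evp u α L₂) = 0 := by
          refine ih L₂ ?_ (by simp [hL₂]) hGood₂
          have h1 : L₂.length + L₂.countP Ltr.isLit =
              (P₁.length + P₁.countP Ltr.isLit) + (S₀.length + S₀.countP Ltr.isLit) + 2 := by
            rw [hL₂]
            simp [List.countP_append, List.countP_cons]
            try omega
          have h2 : S.length + S.countP Ltr.isLit = S₀.length + S₀.countP Ltr.isLit + 1 := by
            rw [hS]
            simp [List.countP_cons]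
            try omega
          omega
        -- the last term
        have hT3 : τ (evp u α P₁ * (u^(j+1) * evp u α S₀)) = 0 := by
          cases hS₀ : S₀ with
          | nil =>
            have hPgood : Good τ V (P₁ ++ [Ltr.pw j]) := by
              apply Good.prefix (Q := Ltr.vl x :: Ltr.st false :: S)
              have he : (P₁ ++ [Ltr.pw j]) ++ Ltr.vl x :: Ltr.st false :: S
                  = P₁ ++ Ltr.pw j :: Ltr.vl x :: Ltr.st false :: S := by simp
              rw [he, ← hL]
              exact hG
            have hrw : evp u α P₁ * (u^(j+1) * evp u α ([] : List (Ltr A)))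
                = evp u α (P₁ ++ [Ltr.pw j]) := by
              simp [evp_append, evp_cons, Ltr.eval, evp]
            rw [hrw]
            refine ih _ ?_ (by simp) hPgood
            have h9 : (P₁ ++ [Ltr.pw j]).length + (P₁ ++ [Ltr.pw j]).countP Ltr.isLit
                = P₁.length + P₁.countP Ltr.isLit + 1 := by
              simp [List.countP_append, List.countP_cons]
              try omega
            have h8 : S.length + S.countP Ltr.isLit
                = S₀.length + S₀.countP Ltr.isLit + 1 := by
              rw [hS]
              simp [List.countP_cons]
              try omega
            omega
          | cons w₂ S₁ =>
            have hw₂W : w₂.isW = true := by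
              have := hS₀front w₂ (by rw [hS₀]; simp)
              have h2 : w₂.isW ≠ false := fun hcon => this (by rw [hcon]; rfl)
              simpa using h2
            have hw₂nonstar : w₂.isStar = false := by
              have hfS : S.filter Ltr.isW = w₂ :: S₁.filter Ltr.isW := by
                rw [hfilS, hS₀]
                simp [List.filter_cons, hw₂W]
              have := hwcSfront w₂ (by rw [hfS]; simp)
              rcases this with h | h
              · simp at h
              · exact h
            obtain ⟨k, rfl⟩ : ∃ k, w₂ = Ltr.pw k := eq_pw_of hw₂W hw₂nonstar
            rw [← hS₀]
            set L₃ : List (Ltr A) := P₁ ++ Ltr.pw (j+k+1) :: S₁ with hL₃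
            have hevpT3 : evp u α P₁ * (u^(j+1) * evp u α S₀) = evp u α L₃ := by
              rw [hS₀, hL₃]
              simp only [evp_append, evp_cons, Ltr.eval]
              have hexp9 : j + 1 + (k + 1) = j + k + 1 + 1 := by omega
              rw [← mul_assoc (u^(j+1)), ← pow_add, hexp9]
            have hS₀alt2 : List.Chain' Ralt (Ltr.pw k :: S₁) := by
              rw [← hS₀]; exact hS₀alt
            have hS₁alt : List.Chain' Ralt S₁ := (List.isChain_cons.1 hS₀alt2).2
            have hS₁front : ∀ h ∈ S₁.head?, Ralt (Ltr.pw k) h := (List.isChain_cons.1 hS₀alt2).1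
            have hGood₃ : Good τ V L₃ := by
              constructor
              · apply chain'_glue haltP₁
                · exact hS₁alt
                · exact haltlast
                · exact hS₁front
              · intro v hv
                rw [hL₃] at hv
                simp only [List.mem_append, List.mem_cons] at hv
                rcases hv with h | h | h
                · exact hG.vmem v (by rw [hL]; simp [h])
                · simp at h
                · exact hG.vmem v (by rw [hL, hS, hS₀]; simp [h])
              · have hfil₃ : L₃.filter Ltr.isW =
                    (P₁.filter Ltr.isW) ++ Ltr.pw (j+k+1) :: (S₁.filter Ltr.isW) := by
                  rw [hL₃]
                  simp [List.filter_append, List.filter_cons]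
                rw [hfil₃]
                apply chain'_glue hwcP₁
                · have hfS : S.filter Ltr.isW = Ltr.pw k :: S₁.filter Ltr.isW := by
                    rw [hfilS, hS₀]
                    simp [List.filter_cons]
                  rw [hfS] at hwcS
                  exact (List.isChain_cons.1 hwcS).2
                · intro v hv
                  exact Or.inr rfl
                · intro v hv
                  exact Or.inl rfl
              · have hfil₃ : L₃.filter Ltr.isW =
                    (P₁.filter Ltr.isW) ++ Ltr.pw (j+k+1) :: (S₁.filter Ltr.isW) := by
                  rw [hL₃]
                  simp [List.filter_append, List.filter_cons]
                rw [hfil₃]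
                apply wfront_helper (T' := Ltr.st false :: S.filter Ltr.isW) (m' := j)
                rw [← hfil]
                exact hG.wfront
            rw [hevpT3]
            refine ih L₃ ?_ (by simp [hL₃]) hGood₃
            have h1 : L₃.length + L₃.countP Ltr.isLit =
                (P₁.length + P₁.countP Ltr.isLit) + (S₁.length + S₁.countP Ltr.isLit) + 1 := by
              rw [hL₃]
              simp [List.countP_append, List.countP_cons]
              try omega
            have h2 : S.length + S.countP Ltr.isLit =
                S₁.length + S₁.countP Ltr.isLit + 2 := by
              rw [hS, hS₀]
              simp [List.countP_cons]
              try omega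
            omega
        rw [hevpT2, map_add, hτL₂, zero_add, ← Algebra.smul_def, map_smul, smul_eq_mul, hT3,
          mul_zero]
    rw [hexp, map_add, hτL₁, zero_add, hc, ← Algebra.smul_def, map_smul, smul_eq_mul, hT2,
      mul_zero]

def blk : Bool × A → List (Ltr A) :=
  fun p => if p.1 then [Ltr.pw 0, Ltr.vl p.2, Ltr.st false] else [Ltr.vl p.2]

lemma blk_ne_nil (p : Bool × A) : blk p ≠ [] := by
  rcases p with ⟨b, x⟩
  cases b <;> simp [blk]

lemma bind_ne_nil (e : List (Bool × A)) (he : e ≠ []) : e.flatMap blk ≠ [] := by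
  cases e with
  | nil => exact absurd rfl he
  | cons p t =>
    simp only [List.flatMap_cons]
    intro hcon
    rcases List.append_eq_nil_iff.1 hcon with ⟨h1, -⟩
    exact blk_ne_nil p h1

lemma evp_bind (u : A) (α : ℂ) (e : List (Bool × A)) :
    evp u α (e.flatMap blk) = (e.map fun p => evp u α (blk p)).prod := by
  induction e with
  | nil => simp [evp]
  | cons p t ih => simp [List.flatMap_cons, evp_append, ih]

lemma bind_good (τ : A →ₗ[ℂ] ℂ) (V : Subalgebra ℂ A) :
    ∀ e : List (Bool × A), List.Chain' (fun p q => p.1 ≠ q.1) e →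
      (∀ p ∈ e, p.2 ∈ V ∧ τ p.2 = 0) →
      Good τ V (e.flatMap blk) ∧
      (∀ x ∈ ((e.flatMap blk).filter Ltr.isW).head?, x = Ltr.pw 0) ∧
      (∀ p ∈ e.head?, ∀ l ∈ (e.flatMap blk).head?, l.isW = p.1) := by
  intro e
  induction e with
  | nil =>
    intro _ _
    refine ⟨⟨?_, ?_, ?_, ?_⟩, ?_, ?_⟩ <;> simp [List.Chain']
  | cons p t ih =>
    intro hchain hmem
    obtain ⟨hGt, hpw, hhead⟩ := ih (List.isChain_cons.1 hchain).2
      (fun q hq => hmem q (by simp [hq]))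
    have hfst := (List.isChain_cons.1 hchain).1
    have hpV := hmem p (by simp)
    rcases p with ⟨b, x⟩
    cases b
    case false =>
      have hLb : (((false, x) : Bool × A) :: t).flatMap blk = Ltr.vl x :: t.flatMap blk := by
        simp [blk, List.flatMap_cons]
      have hfilb : ((((false, x) : Bool × A) :: t).flatMap blk).filter Ltr.isW
          = (t.flatMap blk).filter Ltr.isW := by
        rw [hLb]
        simp [List.filter_cons]
      refine ⟨⟨?_, ?_, ?_, ?_⟩, ?_, ?_⟩
      · rw [hLb]
        refine List.isChain_cons.2 ⟨?_, hGt.alt⟩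
        intro l hl
        cases ht : t with
        | nil =>
          rw [ht] at hl
          simp at hl
        | cons q t' =>
          have hlW := hhead q (by rw [ht]; simp) l hl
          have hq : q.1 = true := by
            have h5 := hfst q (by rw [ht]; simp)
            simp only [ne_eq] at h5
            cases hq2 : q.1
            · exact absurd hq2.symm h5
            · rfl
          have h1 : l.isW = true := by rw [hlW, hq]
          exact fun hcon => by rw [h1] at hcon; simp at hcon
      · intro z hz
        rw [hLb] at hz
        rcases List.mem_cons.1 hz with h | h
        · obtain rfl : z = x := by simpa using h
          exact hpV
        · exact hGt.vmem z h
      · rw [hfilb]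
        exact hGt.wchain
      · rw [hfilb]
        exact hGt.wfront
      · rw [hfilb]
        exact hpw
      · intro q hq l hl
        obtain rfl : ((false, x) : Bool × A) = q := by simpa using hq
        rw [hLb] at hl
        obtain rfl : Ltr.vl x = l := by simpa using hl
        rfl
    case true =>
      have hLb : (((true, x) : Bool × A) :: t).flatMap blk
          = Ltr.pw 0 :: Ltr.vl x :: Ltr.st false :: t.flatMap blk := by
        simp [blk, List.flatMap_cons]
      have hfilb : ((((true, x) : Bool × A) :: t).flatMap blk).filter Ltr.isW
          = Ltr.pw 0 :: Ltr.st false :: (t.flatMap blk).filter Ltr.isW := by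
        rw [hLb]
        simp [List.filter_cons]
      have hbindW : ∀ l ∈ (t.flatMap blk).head?, l.isW = false := by
        intro l hl
        cases ht : t with
        | nil =>
          rw [ht] at hl
          simp at hl
        | cons q t' =>
          have hlW := hhead q (by rw [ht]; simp) l hl
          have hq : q.1 = false := by
            have h5 := hfst q (by rw [ht]; simp)
            simp only [ne_eq] at h5
            cases hq2 : q.1
            · rfl
            · exact absurd hq2.symm h5
          rw [hlW, hq]
      refine ⟨⟨?_, ?_, ?_, ?_⟩, ?_, ?_⟩
      · rw [hLb]
        refine List.isChain_cons_cons.2 ⟨fun hcon => by simp at hcon, ?_⟩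
        refine List.isChain_cons_cons.2 ⟨fun hcon => by simp at hcon, ?_⟩
        refine List.isChain_cons.2 ⟨?_, hGt.alt⟩
        intro l hl
        have h1 : l.isW = false := hbindW l hl
        exact fun hcon => by rw [h1] at hcon; simp at hcon
      · intro z hz
        rw [hLb] at hz
        rcases List.mem_cons.1 hz with h | h
        · simp at h
        · rcases List.mem_cons.1 h with h2 | h2
          · obtain rfl : z = x := by simpa using h2
            exact hpV
          · rcases List.mem_cons.1 h2 with h3 | h3
            · simp at h3
            · exact hGt.vmem z h3
      · rw [hfilb]
        refine List.isChain_cons_cons.2 ⟨Or.inl rfl, ?_⟩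
        refine List.isChain_cons.2 ⟨?_, hGt.wchain⟩
        intro l hl
        obtain rfl : l = Ltr.pw 0 := hpw l hl
        exact Or.inr rfl
      · rw [hfilb]
        intro l hl
        obtain rfl : Ltr.pw 0 = l := by simpa using hl
        rfl
      · rw [hfilb]
        intro l hl
        obtain rfl : Ltr.pw 0 = l := by simpa using hl
        rfl
      · intro q hq l hl
        obtain rfl : ((true, x) : Bool × A) = q := by simpa using hq
        rw [hLb] at hl
        obtain rfl : Ltr.pw 0 = l := by simpa using hl
        rfl

end
end HaarAux

open HaarAux in
/-- Conjugation by a free Haar unitary makes a subalgebra free from another one, without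
changing its joint distribution: if `⟨A₁, A₂⟩` is free from `⟨u, u*⟩`, then `u A₁ u*`
and `A₂` are free, and `(u a₁ u*, …, u a_p u*)` has the same joint distribution as
`(a₁, …, a_p)` for any tuple from `A₁`. -/
theorem haar_rotation_freeness {A : Type*} [Ring A] [StarRing A] [Algebra ℂ A]
    (τ : A →ₗ[ℂ] ℂ) (hτ1 : τ 1 = 1) (htrace : ∀ a b : A, τ (a * b) = τ (b * a))
    (u : A) (hu1 : star u * u = 1) (hu2 : u * star u = 1)
    (humom : ∀ k : ℕ, 1 ≤ k → τ (u ^ k) = 0)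
    (A₁ A₂ : Subalgebra ℂ A)
    (hfree : IsFreePair (fun a => τ a)
      ((Algebra.adjoin ℂ ((A₁ : Set A) ∪ (A₂ : Set A)) : Subalgebra ℂ A) : Set A)
      ((Algebra.adjoin ℂ {u, star u} : Subalgebra ℂ A) : Set A)) :
    IsFreePair (fun a => τ a)
        ((fun a => u * a * star u) '' (A₁ : Set A)) (A₂ : Set A) ∧
      ∀ w : List A, (∀ x ∈ w, x ∈ A₁) →
        τ ((w.map fun a => u * a * star u).prod) = τ w.prod := by
  classical
  set α := τ (star u) with hα
  set V : Subalgebra ℂ A := Algebra.adjoin ℂ ((A₁ : Set A) ∪ (A₂ : Set A)) with hV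
  set W' : Subalgebra ℂ A := Algebra.adjoin ℂ {u, star u} with hW
  have huW : u ∈ W' := Algebra.subset_adjoin (by simp)
  have hsuW : star u ∈ W' := Algebra.subset_adjoin (by simp)
  have tau_conj : ∀ p : A, τ (u * p * star u) = τ p := by
    intro p
    calc τ (u * p * star u) = τ (star u * (u * p)) := htrace _ _
    _ = τ p := by rw [← mul_assoc, hu1, one_mul]
  have tau_conj2 : ∀ p : A, τ (star u * p * u) = τ p := by
    intro p
    calc τ (star u * p * u) = τ (u * (star u * p)) := htrace _ _
    _ = τ p := by rw [← mul_assoc, hu2, one_mul]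
  have hconj_prod : ∀ w : List A,
      (w.map fun a => u * a * star u).prod = u * w.prod * star u := by
    intro w
    induction w with
    | nil => simp [hu2]
    | cons a t ih =>
      simp only [List.map_cons, List.prod_cons, ih]
      simp only [mul_assoc]
      rw [← mul_assoc (star u) u, hu1, one_mul]
  have part2 : ∀ w : List A, (∀ x ∈ w, x ∈ A₁) →
      τ ((w.map fun a => u * a * star u).prod) = τ w.prod := by
    intro w _
    rw [hconj_prod w, tau_conj]
  refine ⟨?_, part2⟩
  intro m j a hm ha halt
  set y : Fin m → A := fun i => if j i then star u * a i * u else a i with hy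
  set cE : Fin m → A := fun i => y i - algebraMap ℂ A (τ (y i)) with hcE
  set e : List (Bool × A) := (List.finRange m).map (fun i => (j i, cE i)) with he
  have conj_center : ∀ (p : A) (t : ℂ),
      u * ((p - algebraMap ℂ A t) * star u) = u * p * star u - algebraMap ℂ A t := by
    intro p t
    rw [sub_mul, mul_sub, ← mul_assoc]
    congr 1
    rw [Algebra.left_comm, hu2, mul_one]
  have hyV : ∀ i : Fin m, y i ∈ V := by
    intro i
    cases hj : j i
    · have h1 := ha i
      rw [hj] at h1
      simp only [if_neg Bool.false_ne_true] at h1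
      have hyi : y i = a i := by simp [hy, hj]
      rw [hyi]
      exact Algebra.subset_adjoin (Set.mem_union_right _ h1)
    · have h1 := ha i
      rw [hj] at h1
      simp only [if_pos] at h1
      obtain ⟨b, hbA, hba⟩ := h1
      have hyb : y i = b := by
        have hyi : y i = star u * a i * u := by simp [hy, hj]
        rw [hyi, ← hba]
        simp only [mul_assoc]
        rw [hu1, mul_one, ← mul_assoc, hu1, one_mul]
      rw [hyb]
      exact Algebra.subset_adjoin (Set.mem_union_left _ hbA)
  have hτy : ∀ i : Fin m, τ (y i) = τ (a i) := by
    intro i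
    cases hj : j i
    · simp [hy, hj]
    · have hyi : y i = star u * a i * u := by simp [hy, hj]
      rw [hyi, tau_conj2]
  have hblk : ∀ i : Fin m,
      evp u α (blk (j i, cE i)) = a i - algebraMap ℂ A (τ (a i)) := by
    intro i
    cases hj : j i
    · have hyi : y i = a i := by simp [hy, hj]
      simp [blk, hj, evp, Ltr.eval, hcE, hyi]
    · have hyi : y i = star u * a i * u := by simp [hy, hj]
      have huyu : u * y i * star u = a i := by
        rw [hyi]
        simp only [mul_assoc]
        rw [hu2, mul_one, ← mul_assoc, hu2, one_mul]
      have hev : evp u α (blk ((true : Bool), cE i)) = u * (cE i * star u) := by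
        simp [blk, evp, Ltr.eval]
      rw [hev]
      have hcEi : cE i = y i - algebraMap ℂ A (τ (y i)) := rfl
      rw [hcEi, conj_center, huyu, hτy]
  have hchain : List.Chain' (fun p q : Bool × A => p.1 ≠ q.1) e := by
    rw [he]
    unfold List.Chain'
    rw [List.isChain_map, List.isChain_iff_getElem]
    intro i h
    simp only [List.getElem_finRange]
    have hi1 : i + 1 < m := by
      have := List.length_finRange (n := m)
      omega
    exact halt ⟨i, by omega⟩ (by simpa using hi1)
  have hmem : ∀ p ∈ e, p.2 ∈ V ∧ τ p.2 = 0 := by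
    intro p hp
    rw [he] at hp
    obtain ⟨i, -, rfl⟩ := List.mem_map.1 hp
    constructor
    · exact sub_mem (hyV i) (algebraMap_mem V _)
    · simp [hcE, map_sub, tau_alg τ hτ1]
  obtain ⟨hGe, -, -⟩ := bind_good τ V e hchain hmem
  have hene : e ≠ [] := by
    intro hcon
    have := congrArg List.length hcon
    rw [he] at this
    simp at this
    omega
  have hLne := bind_ne_nil e hene
  have h0 := key τ hτ1 u humom V W' huW hsuW hfree
    ((e.flatMap blk).length + (e.flatMap blk).countP Ltr.isLit) (e.flatMap blk) le_rfl hLne hGe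
  have hfinal : ((List.finRange m).map fun i => a i - algebraMap ℂ A (τ (a i))).prod
      = evp u α (e.flatMap blk) := by
    rw [evp_bind, he, List.map_map]
    congr 1
    apply List.map_congr_left
    intro i _
    exact (hblk i).symm
  show τ (((List.finRange m).map fun i => a i - algebraMap ℂ A (τ (a i))).prod) = 0
  rw [hfinal]
  exact h0
end

section
/- Let μ be a compactly supported probability measure on ℝ with Cauchy transform G(z) = ∫(z−t)^{-1}dμ(t). Then the Stieltjes inversion formula holds: for every bounded continuous function f, lim_{ε↓0} ∫_ℝ f(t)·(−1/π)·Im G(t + iε) dt = ∫_ℝ f dμ. -/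
open MeasureTheory Real Filter Complex

open scoped Topology

namespace StieltjesInvAux

lemma kernel_eq {ε : ℝ} (hε : ε ≠ 0) (s t : ℝ) :
    ((t - s) ^ 2 + ε ^ 2)⁻¹ = (ε ^ 2)⁻¹ * (1 + ((t - s) / ε) ^ 2)⁻¹ := by
  rw [← mul_inv]; congr 1; field_simp; ring

lemma integrable_kernel {ε : ℝ} (hε : 0 < ε) (s : ℝ) :
    Integrable (fun t : ℝ => ((t - s) ^ 2 + ε ^ 2)⁻¹) := by
  have h2 : Integrable (fun t : ℝ => (1 + ((t - s) / ε) ^ 2)⁻¹) :=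
    (integrable_inv_one_add_sq.comp_div hε.ne').comp_sub_right s
  exact (h2.const_mul ((ε ^ 2)⁻¹)).congr
    (by filter_upwards with t; rw [← kernel_eq hε.ne'])

lemma integral_kernel {ε : ℝ} (hε : 0 < ε) (s : ℝ) :
    ∫ t : ℝ, ((t - s) ^ 2 + ε ^ 2)⁻¹ = π / ε := by
  simp_rw [kernel_eq hε.ne' s]
  rw [integral_const_mul]
  have h1 : (fun t : ℝ => (1 + ((t - s) / ε) ^ 2)⁻¹)
      = (fun x : ℝ => (fun u : ℝ => (1 + (u / ε) ^ 2)⁻¹) (x - s)) := rfl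
  rw [h1, integral_sub_right_eq_self (fun u : ℝ => (1 + (u / ε) ^ 2)⁻¹) s,
    MeasureTheory.Measure.integral_comp_div (fun u : ℝ => (1 + u ^ 2)⁻¹) ε,
    integral_univ_inv_one_add_sq, abs_of_pos hε, smul_eq_mul]
  field_simp

lemma norm_bound {ε C : ℝ} (hε : 0 < ε) {f : ℝ → ℝ} (hC : ∀ x, |f x| ≤ C) (s t : ℝ) :
    ‖f t * (ε / π) * ((t - s) ^ 2 + ε ^ 2)⁻¹‖
      ≤ C * (ε / π) * ((t - s) ^ 2 + ε ^ 2)⁻¹ := by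
  have hk : (0:ℝ) < ((t - s) ^ 2 + ε ^ 2)⁻¹ := by positivity
  rw [Real.norm_eq_abs, abs_mul, abs_mul, abs_of_pos (div_pos hε pi_pos),
    _root_.abs_of_pos hk]
  gcongr
  exact hC t

lemma integrable_in_t {ε C : ℝ} (hε : 0 < ε) {f : ℝ → ℝ} (hf : Continuous f)
    (hC : ∀ x, |f x| ≤ C) (s : ℝ) :
    Integrable (fun t : ℝ => f t * (ε / π) * ((t - s) ^ 2 + ε ^ 2)⁻¹) := by
  apply Integrable.mono' ((integrable_kernel hε s).const_mul (C * (ε / π)))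
  · apply Continuous.aestronglyMeasurable
    exact (hf.mul continuous_const).mul (Continuous.inv₀ (by continuity)
      (fun t => by positivity))
  · filter_upwards with t
    exact norm_bound hε hC s t

lemma fubini_step {ε C : ℝ} (hε : 0 < ε) (μ : Measure ℝ) [IsProbabilityMeasure μ]
    {f : ℝ → ℝ} (hf : Continuous f) (hC : ∀ x, |f x| ≤ C) :
    (∫ t : ℝ, ∫ s : ℝ, f t * (ε / π) * ((t - s) ^ 2 + ε ^ 2)⁻¹ ∂μ)
      = ∫ s : ℝ, (∫ t : ℝ, f t * (ε / π) * ((t - s) ^ 2 + ε ^ 2)⁻¹) ∂μ := by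
  have contG : Continuous (Function.uncurry
      (fun s t : ℝ => f t * (ε / π) * ((t - s) ^ 2 + ε ^ 2)⁻¹)) := by
    apply Continuous.mul
    · exact (hf.comp continuous_snd).mul continuous_const
    · exact Continuous.inv₀ (by continuity) (fun p => by positivity)
  have intT : ∀ s : ℝ, Integrable (fun t : ℝ => f t * (ε / π) * ((t - s) ^ 2 + ε ^ 2)⁻¹) :=
    integrable_in_t hε hf hC
  have intNorm : Integrable (fun s : ℝ =>
      ∫ t : ℝ, ‖f t * (ε / π) * ((t - s) ^ 2 + ε ^ 2)⁻¹‖) μ := by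
    apply Integrable.mono' (integrable_const C)
      (contG.norm.stronglyMeasurable.integral_prod_right'.aestronglyMeasurable)
    filter_upwards with s
    have h1 : (∫ t : ℝ, ‖f t * (ε / π) * ((t - s) ^ 2 + ε ^ 2)⁻¹‖)
        ≤ ∫ t : ℝ, C * (ε / π) * ((t - s) ^ 2 + ε ^ 2)⁻¹ := by
      apply integral_mono (intT s).norm ((integrable_kernel hε s).const_mul _)
      exact fun t => norm_bound hε hC s t
    rw [show (fun t : ℝ => C * (ε / π) * ((t - s) ^ 2 + ε ^ 2)⁻¹)
        = (fun t : ℝ => (C * (ε / π)) * ((t - s) ^ 2 + ε ^ 2)⁻¹) from rfl,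
      integral_const_mul, integral_kernel hε s] at h1
    have h2 : C * (ε / π) * (π / ε) = C := by field_simp
    rw [h2] at h1
    rw [Real.norm_eq_abs, _root_.abs_of_nonneg (integral_nonneg fun t => norm_nonneg _)]
    exact h1
  have intG : Integrable (Function.uncurry
      (fun s t : ℝ => f t * (ε / π) * ((t - s) ^ 2 + ε ^ 2)⁻¹)) (μ.prod volume) :=
    (integrable_prod_iff contG.aestronglyMeasurable).mpr
      ⟨ae_of_all _ intT, intNorm⟩
  exact (integral_integral_swap intG).symm

lemma subst_eq {ε : ℝ} (hε : 0 < ε) (f : ℝ → ℝ) (s : ℝ) :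
    (∫ t : ℝ, f t * (ε / π) * ((t - s) ^ 2 + ε ^ 2)⁻¹)
      = ∫ u : ℝ, f (s + ε * u) * (π * (1 + u ^ 2))⁻¹ := by
  set h : ℝ → ℝ := fun t => f t * (ε / π) * ((t - s) ^ 2 + ε ^ 2)⁻¹ with hh
  have h1 : (∫ u : ℝ, h (s + ε * u)) = |ε⁻¹| • ∫ x : ℝ, h (s + x) :=
    MeasureTheory.Measure.integral_comp_mul_left (fun x : ℝ => h (s + x)) ε
  have h2 : (∫ x : ℝ, h (s + x)) = ∫ x : ℝ, h x :=
    integral_add_left_eq_self h s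
  have h3 : (∫ u : ℝ, ε * h (s + ε * u)) = ε * ∫ u : ℝ, h (s + ε * u) :=
    integral_const_mul ε _
  have h4 : ∀ u : ℝ, ε * h (s + ε * u) = f (s + ε * u) * (π * (1 + u ^ 2))⁻¹ := by
    intro u
    simp only [hh]
    have : (s + ε * u - s) ^ 2 + ε ^ 2 = ε ^ 2 * (1 + u ^ 2) := by ring
    rw [this, mul_inv]
    have hε2 : (ε:ℝ) ^ 2 ≠ 0 := by positivity
    field_simp
  calc (∫ t : ℝ, h t) = ε * ((∫ u : ℝ, h (s + ε * u))) := by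
        rw [h1, h2, abs_of_pos (inv_pos.2 hε), smul_eq_mul, ← mul_assoc,
          mul_inv_cancel₀ hε.ne', one_mul]
    _ = ∫ u : ℝ, ε * h (s + ε * u) := h3.symm
    _ = ∫ u : ℝ, f (s + ε * u) * (π * (1 + u ^ 2))⁻¹ :=
        integral_congr_ae (by filter_upwards with u; rw [h4])

lemma im_step {ε : ℝ} (hε : 0 < ε) (μ : Measure ℝ) [IsProbabilityMeasure μ]
    (f : ℝ → ℝ) (t : ℝ) :
    f t * (-1 / π) * (∫ s : ℝ, (((t : ℂ) + ε * I) - (s : ℂ))⁻¹ ∂μ).im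
      = ∫ s : ℝ, f t * (ε / π) * ((t - s) ^ 2 + ε ^ 2)⁻¹ ∂μ := by
  set g : ℝ → ℂ := fun s => (((t : ℂ) + ε * I) - (s : ℂ))⁻¹ with hg
  have hne : ∀ s : ℝ, ((t : ℂ) + ε * I) - (s : ℂ) ≠ 0 := by
    intro s h
    have : (((t : ℂ) + ε * I) - (s : ℂ)).im = 0 := by rw [h]; simp
    simp [Complex.add_im, Complex.sub_im] at this
    exact hε.ne' this
  have hgim : ∀ s : ℝ, (g s).im = -ε * ((t - s) ^ 2 + ε ^ 2)⁻¹ := by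
    intro s
    rw [hg]
    simp only [Complex.inv_im, Complex.sub_im, Complex.add_im, Complex.ofReal_im,
      Complex.mul_im, Complex.I_im, Complex.I_re, Complex.ofReal_re, Complex.normSq_apply,
      Complex.sub_re, Complex.add_re, Complex.mul_re]
    rw [div_eq_mul_inv]
    ring_nf
  have hgcont : Continuous g := by
    apply Continuous.inv₀
    · continuity
    · exact fun s => hne s
  have hgint : Integrable g μ := by
    apply Integrable.mono' (integrable_const (ε⁻¹ : ℝ)) hgcont.aestronglyMeasurable
    filter_upwards with s
    rw [norm_inv]
    rw [inv_le_inv₀ ?_ hε]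
    · calc ε = |(((t : ℂ) + ε * I) - (s : ℂ)).im| := by
            simp [Complex.add_im, Complex.sub_im, abs_of_pos hε]
        _ ≤ ‖((t : ℂ) + ε * I) - (s : ℂ)‖ := Complex.abs_im_le_norm _
    · exact (norm_pos_iff).mpr (hne s)
  have him : (∫ s : ℝ, g s ∂μ).im = ∫ s : ℝ, (g s).im ∂μ := (integral_im hgint).symm
  rw [him]
  have h5 : (∫ s : ℝ, (g s).im ∂μ) = -ε * ∫ s : ℝ, ((t - s) ^ 2 + ε ^ 2)⁻¹ ∂μ := by
    rw [← integral_const_mul]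
    exact integral_congr_ae (ae_of_all _ fun s => hgim s)
  rw [h5, show (fun s : ℝ => f t * (ε / π) * ((t - s) ^ 2 + ε ^ 2)⁻¹)
      = (fun s : ℝ => (f t * (ε / π)) * ((t - s) ^ 2 + ε ^ 2)⁻¹) from rfl,
    integral_const_mul]
  ring

lemma poisson_integrable : Integrable (fun u : ℝ => (π * (1 + u ^ 2))⁻¹) := by
  simp_rw [mul_inv]
  exact integrable_inv_one_add_sq.const_mul _

lemma poisson_integral : ∫ u : ℝ, (π * (1 + u ^ 2))⁻¹ = 1 := by
  simp_rw [mul_inv]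
  rw [integral_const_mul, integral_univ_inv_one_add_sq, inv_mul_cancel₀ pi_ne_zero]

lemma poisson_pos (u : ℝ) : (0:ℝ) < (π * (1 + u ^ 2))⁻¹ := by positivity

end StieltjesInvAux

open StieltjesInvAux

set_option maxHeartbeats 1000000 in
/-- Stieltjes inversion: for a compactly supported probability measure `μ` on `ℝ` with
Cauchy transform `G(z) = ∫ (z−t)⁻¹ dμ(t)`, and any bounded continuous `f`,
`lim_{ε↓0} ∫ f(t)·(−1/π)·Im G(t+iε) dt = ∫ f dμ`. -/
theorem stieltjes_inversion (μ : Measure ℝ) [IsProbabilityMeasure μ]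
    (hcomp : ∃ R : ℝ, μ (Set.Icc (-R) R)ᶜ = 0)
    (f : ℝ → ℝ) (hf : Continuous f) (hbd : ∃ C : ℝ, ∀ x, |f x| ≤ C) :
    Tendsto
      (fun ε : ℝ => ∫ t : ℝ,
        f t * (-1 / π) * (∫ s : ℝ, (((t : ℂ) + ε * I) - (s : ℂ))⁻¹ ∂μ).im)
      (nhdsWithin 0 (Set.Ioi 0))
      (nhds (∫ t, f t ∂μ)) := by
  obtain ⟨C, hC⟩ := hbd
  -- the Poisson average
  set H : ℝ → ℝ → ℝ := fun ε s => ∫ u : ℝ, f (s + ε * u) * (π * (1 + u ^ 2))⁻¹ with hH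
  have hptbd : ∀ (ε s : ℝ), ∀ u : ℝ, ‖f (s + ε * u) * (π * (1 + u ^ 2))⁻¹‖
      ≤ C * (π * (1 + u ^ 2))⁻¹ := by
    intro ε s u
    rw [Real.norm_eq_abs, abs_mul, _root_.abs_of_pos (poisson_pos u)]
    exact mul_le_mul_of_nonneg_right (hC _) (poisson_pos u).le
  have hbound_int : Integrable (fun u : ℝ => C * (π * (1 + u ^ 2))⁻¹) :=
    poisson_integrable.const_mul C
  have hHbd : ∀ ε s, ‖H ε s‖ ≤ C := by
    intro ε s
    calc ‖H ε s‖ ≤ ∫ u : ℝ, C * (π * (1 + u ^ 2))⁻¹ :=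
          norm_integral_le_of_norm_le hbound_int (ae_of_all _ (hptbd ε s))
      _ = C := by rw [integral_const_mul, poisson_integral, mul_one]
  have hHcont : ∀ ε : ℝ, Continuous (fun s => H ε s) := by
    intro ε
    apply continuous_of_dominated (bound := fun u : ℝ => C * (π * (1 + u ^ 2))⁻¹)
    · intro s
      apply Continuous.aestronglyMeasurable
      exact (hf.comp (continuous_const.add (continuous_const.mul continuous_id))).mul
        ((continuous_const.mul (continuous_const.add (continuous_pow 2))).inv₀ (fun u => (mul_pos pi_pos (by positivity : (0:ℝ) < 1 + u ^ 2)).ne'))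
    · exact fun s => ae_of_all _ (hptbd ε s)
    · exact hbound_int
    · filter_upwards with u
      exact (hf.comp (continuous_id.add continuous_const)).mul continuous_const
  have hHlim : ∀ s : ℝ, Tendsto (fun ε => H ε s) (nhdsWithin 0 (Set.Ioi 0)) (nhds (f s)) := by
    intro s
    have key : Tendsto (fun ε => H ε s) (nhdsWithin 0 (Set.Ioi 0))
        (nhds (∫ u : ℝ, f s * (π * (1 + u ^ 2))⁻¹)) := by
      apply tendsto_integral_filter_of_dominated_convergence
        (bound := fun u : ℝ => C * (π * (1 + u ^ 2))⁻¹)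
      · filter_upwards with ε
        apply Continuous.aestronglyMeasurable
        exact (hf.comp (continuous_const.add (continuous_const.mul continuous_id))).mul
          ((continuous_const.mul (continuous_const.add (continuous_pow 2))).inv₀ (fun u => (mul_pos pi_pos (by positivity : (0:ℝ) < 1 + u ^ 2)).ne'))
      · filter_upwards with ε
        exact ae_of_all _ (hptbd ε s)
      · exact hbound_int
      · filter_upwards with u
        have h0 : Tendsto (fun ε : ℝ => s + ε * u) (nhdsWithin 0 (Set.Ioi 0)) (nhds s) := by
          have hcont : Continuous fun ε : ℝ => s + ε * u :=
            continuous_const.add (continuous_id.mul continuous_const)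
          have := hcont.tendsto 0
          simp only [zero_mul, add_zero] at this
          exact this.mono_left nhdsWithin_le_nhds
        exact (((hf.tendsto s).comp h0).mul_const _)
    have : (∫ u : ℝ, f s * (π * (1 + u ^ 2))⁻¹) = f s := by
      rw [integral_const_mul, poisson_integral, mul_one]
    rwa [this] at key
  have main : Tendsto (fun ε : ℝ => ∫ s, H ε s ∂μ) (nhdsWithin 0 (Set.Ioi 0))
      (nhds (∫ t, f t ∂μ)) := by
    apply tendsto_integral_filter_of_dominated_convergence (bound := fun _ : ℝ => C)
    · filter_upwards with ε
      exact (hHcont ε).aestronglyMeasurable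
    · filter_upwards with ε
      exact ae_of_all _ fun s => hHbd ε s
    · exact integrable_const C
    · exact ae_of_all _ fun s => hHlim s
  apply main.congr'
  filter_upwards [self_mem_nhdsWithin] with ε (hε : ε ∈ Set.Ioi 0)
  have hε' : (0:ℝ) < ε := hε
  calc (∫ s : ℝ, H ε s ∂μ)
      = ∫ s : ℝ, (∫ t : ℝ, f t * (ε / π) * ((t - s) ^ 2 + ε ^ 2)⁻¹) ∂μ :=
        integral_congr_ae (ae_of_all _ fun s => (subst_eq hε' f s).symm)
    _ = ∫ t : ℝ, ∫ s : ℝ, f t * (ε / π) * ((t - s) ^ 2 + ε ^ 2)⁻¹ ∂μ :=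
        (fubini_step hε' μ hf hC).symm
    _ = ∫ t : ℝ, f t * (-1 / π) * (∫ s : ℝ, (((t : ℂ) + ε * I) - (s : ℂ))⁻¹ ∂μ).im :=
        integral_congr_ae (ae_of_all _ fun t => (im_step hε' μ f t).symm)
end
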